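/- arXiv:1510.01762 — 3 statements merged into one kernel-verified Lean document; each statement's English description precedes it below -/
import Mathlib

section
/- Let H be a complex Hilbert space. Let T be a bounded self-adjoint operator on H such that either T or -T is coercive, and set σ = 1 if T is coercive and σ = -1 if -T is coercive. Let T₁ be a compact self-adjoint operator on H, and let T₂ be a compact self-adjoint operator on H such that σ·Re⟨T₂u, u⟩ ≥ 0 for all u ∈ H. Then the set S = {k ∈ ℝ : k > 0 and there exists u ∈ H, u ≠ 0, with T u + k² T₁ u + k⁴ T₂ u = 0} has no accumulation point in ℝ (so S is at most countable and discrete, with +∞ as its only possible accumulation point), and for every k ∈ S the solution space {u ∈ H : T u + k² T₁ u + k⁴ T₂ u = 0} is a finite-dimensional subspace of H. -/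
/-!
Coercivity makes `T` invertible, so with the compact operators `A = -T⁻¹T₁` and `B = -T⁻¹T₂`
the equation `T u + z T₁ u + z² T₂ u = 0` reads `u = z A u + z² B u`. Then `(u, z u)` is an
eigenvector, with eigenvalue `z⁻¹`, of the companion operator `M (u, v) = (A u + B v, u)` on
`H × H`, and `M²` is compact. The eigenvectors of distinct eigenvalues of `M` span a strictly
increasing chain of finite-dimensional subspaces on which `M² - μ²` lowers the level; Riesz's lemma
turns such a chain into a uniformly separated sequence inside a compact set, so only finitely many
eigenvalues satisfy `‖μ‖ ≥ δ`, i.e. only finitely many `z = k²` lie in a bounded set. The kernel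
of `T + z T₁ + z² T₂ = T (1 - (z A + z² B))` is the eigenspace for `1` of a compact operator, on
which the identity is compact, hence it is finite-dimensional.
-/

open scoped InnerProductSpace

/-- A bounded operator on a complex Hilbert space is coercive if
`Re⟪A u, u⟫ ≥ c ‖u‖²` for some `c > 0` and all `u`. -/
def OpCoercive {H : Type*} [NormedAddCommGroup H] [InnerProductSpace ℂ H]
    (A : H →L[ℂ] H) : Prop :=
  ∃ c : ℝ, 0 < c ∧ ∀ u : H, c * ‖u‖ ^ 2 ≤ (inner ℂ (A u) u : ℂ).re

open Module End

section

variable {𝕜 E : Type*} [RCLike 𝕜] [NormedAddCommGroup E] [NormedSpace 𝕜 E]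

theorem Submodule.exists_norm_eq_one_forall_le_norm_sub {F G : Submodule 𝕜 E}
    (hF : IsClosed (F : Set E)) (hFG : F < G) {r : ℝ} (hr : r < 1) :
    ∃ x ∈ G, ‖x‖ = 1 ∧ ∀ y ∈ F, r ≤ ‖x - y‖ := by
  obtain ⟨g, hgG, hgF⟩ := SetLike.exists_of_lt hFG
  obtain ⟨x, -, hx1, hx⟩ := riesz_lemma_of_lt_one (F := F.comap G.subtype)
    (hF.preimage continuous_subtype_val) ⟨⟨g, hgG⟩, hgF⟩ hr
  exact ⟨x, x.2, hx1, fun y hy => hx ⟨y, hFG.le hy⟩ hy⟩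

theorem IsCompactOperator.not_forall_lt_succ {M : E →L[𝕜] E} (hM : IsCompactOperator M)
    {V : ℕ → Submodule 𝕜 E} (hV : ∀ n, IsClosed (V n : Set E)) (hMV : ∀ n, ∀ x ∈ V n, M x ∈ V n)
    {μ : ℕ → 𝕜} {δ : ℝ} (hδ : 0 < δ) (hμ : ∀ n, δ ≤ ‖μ n‖)
    (hMμ : ∀ n, ∀ x ∈ V (n + 1), M x - μ n • x ∈ V n) :
    ¬ ∀ n, V n < V (n + 1) := by
  intro hlt
  have hmono : Monotone V := monotone_nat_of_le_succ fun n => (hlt n).le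
  choose x hxV hx1 hxsep using fun n =>
    Submodule.exists_norm_eq_one_forall_le_norm_sub (hV n) (hlt n) (r := 1 / 2) (by norm_num)
  -- `M (x n) - M (x m) = μ n • (x n - y)` with `y ∈ V n`
  have hsep : ∀ m n, m < n → δ / 2 ≤ dist (M (x n)) (M (x m)) := by
    intro m n hmn
    have hy : (μ n)⁻¹ • ((μ n • x n - M (x n)) + M (x m)) ∈ V n := by
      refine Submodule.smul_mem _ _ (Submodule.add_mem _ ?_ ?_)
      · simpa using Submodule.neg_mem _ (hMμ n _ (hxV n))
      · exact hmono hmn (hMV _ _ (hxV m))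
    have hμ0 : μ n ≠ 0 := norm_pos_iff.mp (hδ.trans_le (hμ n))
    calc δ / 2 = δ * (1 / 2) := by ring
      _ ≤ ‖μ n‖ * ‖x n - (μ n)⁻¹ • ((μ n • x n - M (x n)) + M (x m))‖ :=
          mul_le_mul (hμ n) (hxsep n _ hy) (by norm_num) (norm_nonneg _)
      _ = dist (M (x n)) (M (x m)) := by
          rw [dist_eq_norm, ← norm_smul, smul_sub, smul_inv_smul₀ hμ0]
          congr 1; abel
  have hpair : Pairwise fun m n => δ / 2 ≤ dist (M (x m)) (M (x n)) := by
    intro m n hmn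
    rcases hmn.lt_or_gt with h | h
    · rw [dist_comm]; exact hsep m n h
    · exact hsep n m h
  have hK : IsCompact (closure (M '' Metric.closedBall 0 1)) :=
    hM.isCompact_closure_image_closedBall 1
  have hMx : (fun n => M (x n)) ⁻¹' closure (M '' Metric.closedBall 0 1) = Set.univ :=
    Set.eq_univ_of_forall fun n => subset_closure ⟨x n, by simp [hx1], rfl⟩
  have huniv : IsCompact (Set.univ : Set ℕ) := hMx ▸
    (Metric.isClosedEmbedding_of_pairwise_le_dist (half_pos hδ) hpair).isCompact_preimage hK
  exact Set.infinite_univ huniv.finite_of_discrete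

theorem finite_setOf_hasEigenvalue_of_isCompactOperator_mul_self {M : E →L[𝕜] E}
    (hM : IsCompactOperator (M * M)) {δ : ℝ} (hδ : 0 < δ) :
    {μ : 𝕜 | HasEigenvalue (M : End 𝕜 E) μ ∧ δ ≤ ‖μ‖}.Finite := by
  by_contra hinf
  set e := Set.Infinite.natEmbedding _ hinf
  set μ : ℕ → 𝕜 := fun n => (e n : 𝕜)
  have hμinj : Function.Injective μ := Subtype.val_injective.comp e.injective
  choose w hw using fun n => (e n).2.1.exists_hasEigenvector
  have hli : LinearIndependent 𝕜 w := eigenvectors_linearIndependent' _ μ hμinj w hw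
  set V : ℕ → Submodule 𝕜 E := fun n => Submodule.span 𝕜 (w '' Set.Iio n)
  have hMw : ∀ j, M (w j) = μ j • w j := fun j => (hw j).apply_eq_smul
  have hwV : ∀ {j n}, j < n → w j ∈ V n := fun h => Submodule.subset_span ⟨_, h, rfl⟩
  have hMV : ∀ n, ∀ x ∈ V n, M x ∈ V n := by
    intro n
    refine Submodule.span_le (p := (V n).comap (M : E →ₗ[𝕜] E)).2 ?_
    rintro _ ⟨j, hj, rfl⟩
    simpa [hMw] using Submodule.smul_mem _ (μ j) (hwV hj)
  have hMμ : ∀ n, ∀ x ∈ V (n + 1), M x - μ n • x ∈ V n := by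
    intro n
    refine Submodule.span_le (p := (V n).comap ((M - μ n • 1 : E →L[𝕜] E) : E →ₗ[𝕜] E)).2 ?_
    rintro _ ⟨j, hj, rfl⟩
    have : M (w j) - μ n • w j = (μ j - μ n) • w j := by rw [hMw, sub_smul]
    rcases (Nat.lt_succ_iff.mp hj).lt_or_eq with hjn | rfl
    · simpa [this] using Submodule.smul_mem _ (μ j - μ n) (hwV hjn)
    · simp [this]
  have hMMμ : ∀ n, ∀ x ∈ V (n + 1), (M * M) x - μ n ^ 2 • x ∈ V n := by
    intro n x hx
    have : (M * M) x - μ n ^ 2 • x = M (M x - μ n • x) + μ n • (M x - μ n • x) := by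
      simp only [mul_apply_eq_comp, map_sub, map_smul, smul_sub, smul_smul, sq]
      abel
    rw [this]
    exact Submodule.add_mem _ (hMV n _ (hMμ n x hx)) (Submodule.smul_mem _ _ (hMμ n x hx))
  refine hM.not_forall_lt_succ (V := V) (fun n =>
    have := FiniteDimensional.span_of_finite 𝕜 ((Set.finite_Iio n).image w)
    Submodule.closed_of_finiteDimensional _)
    (fun n x hx => hMV n _ (hMV n x hx)) (pow_pos hδ 2) (μ := fun n => μ n ^ 2)
    (fun n => by simpa [norm_pow] using pow_le_pow_left₀ hδ.le (e n).2.2 2) hMMμ fun n => ?_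
  refine lt_of_le_of_ne (Submodule.span_mono (Set.image_mono (Set.Iio_subset_Iio n.le_succ)))
    fun h => hli.notMem_span_image (s := Set.Iio n) (x := n) (by simp) ?_
  simpa [V, h] using hwV n.lt_succ_self

theorem IsCompactOperator.finiteDimensional_eigenspace {M : E →L[𝕜] E} (hM : IsCompactOperator M)
    {μ : 𝕜} (hμ : μ ≠ 0) : FiniteDimensional 𝕜 (eigenspace (M : End 𝕜 E) μ) := by
  set V := eigenspace (M : End 𝕜 E) μ
  have hMV : ∀ x ∈ V, (M : End 𝕜 E) x ∈ V := fun x hx => by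
    rw [mem_eigenspace_iff.mp hx]; exact V.smul_mem μ hx
  have hV : IsClosed (V : Set E) := by
    have : (V : Set E) = {x | M x = μ • x} := Set.ext fun x => mem_eigenspace_iff
    exact this ▸ isClosed_eq M.continuous (continuous_const_smul μ)
  have hid : (id : V → V) = μ⁻¹ • (M : End 𝕜 E).restrict hMV := by
    ext x
    simp [LinearMap.restrict_apply, mem_eigenspace_iff.mp x.2, inv_smul_smul₀ hμ]
  exact .of_isCompactOperator_id (hid ▸ (hM.restrict hMV hV).smul μ⁻¹)

theorem finiteDimensional_ker_add_of_isUnit {T K : E →L[𝕜] E} (hT : IsUnit T)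
    (hK : IsCompactOperator K) :
    FiniteDimensional 𝕜 (LinearMap.ker ((T + K : E →L[𝕜] E) : E →ₗ[𝕜] E)) := by
  obtain ⟨S, rfl⟩ := hT
  have : LinearMap.ker ((S + K : E →L[𝕜] E) : E →ₗ[𝕜] E) =
      eigenspace ((-(↑S⁻¹ * K) : E →L[𝕜] E) : End 𝕜 E) 1 := by
    ext x
    have hinvS : ∀ y, (↑S⁻¹ : E →L[𝕜] E) ((S : E →L[𝕜] E) y) = y := fun y => by
      rw [← mul_apply_eq_comp, Units.inv_mul, one_apply_eq_self]
    have hSinv : ∀ y, (S : E →L[𝕜] E) ((↑S⁻¹ : E →L[𝕜] E) y) = y := fun y => by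
      rw [← mul_apply_eq_comp, Units.mul_inv, one_apply_eq_self]
    simp only [LinearMap.mem_ker, mem_eigenspace_iff, one_smul, ContinuousLinearMap.coe_coe,
      add_apply, neg_apply, mul_apply_eq_comp]
    constructor
    · intro h
      rw [neg_eq_iff_add_eq_zero, add_comm]
      nth_rw 1 [← hinvS x]
      rw [← map_add, h, map_zero]
    · intro h
      nth_rw 1 [← h]
      rw [map_neg, hSinv, neg_add_cancel]
  rw [this]
  exact (hK.clm_comp _).neg.finiteDimensional_eigenspace one_ne_zero

/-- If `u = z • A u + z ^ 2 • B u` with `z ≠ 0`, then `(u, z • u)` is an eigenvector for `z⁻¹`.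
The operator itself is not compact, but its square is when `A` and `B` are. -/
def quadraticCompanion (A B : E →L[𝕜] E) : E × E →L[𝕜] E × E :=
  (A.coprod B).prod (ContinuousLinearMap.fst 𝕜 E E)

@[simp]
theorem quadraticCompanion_apply (A B : E →L[𝕜] E) (p : E × E) :
    quadraticCompanion A B p = (A p.1 + B p.2, p.1) := rfl

theorem isCompactOperator_quadraticCompanion_mul_self {A B : E →L[𝕜] E}
    (hA : IsCompactOperator A) (hB : IsCompactOperator B) :
    IsCompactOperator (quadraticCompanion A B * quadraticCompanion A B) := by
  have hAB : IsCompactOperator (A.coprod B) := by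
    have : ⇑(A.coprod B) = ⇑(A.comp (.fst 𝕜 E E)) + ⇑(B.comp (.snd 𝕜 E E)) := rfl
    exact this ▸ (hA.comp_clm _).add (hB.comp_clm _)
  have : ⇑(quadraticCompanion A B * quadraticCompanion A B) =
      ⇑(ContinuousLinearMap.inl 𝕜 E E) ∘ ⇑(A.coprod B) ∘ ⇑(quadraticCompanion A B) +
        ⇑(ContinuousLinearMap.inr 𝕜 E E) ∘ ⇑(A.coprod B) := by
    ext p <;> simp [mul_apply_eq_comp]
  exact this ▸ ((hAB.comp_clm _).clm_comp _).add (hAB.clm_comp _)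

theorem hasEigenvalue_quadraticCompanion_inv {T T₁ T₂ S : E →L[𝕜] E} (hS : S * T = 1) {z : 𝕜}
    (hz : z ≠ 0) {u : E} (hu : u ≠ 0) (h : T u + z • T₁ u + z ^ 2 • T₂ u = 0) :
    HasEigenvalue (quadraticCompanion (-(S * T₁)) (-(S * T₂)) : End 𝕜 (E × E)) z⁻¹ := by
  have hSh : u + z • S (T₁ u) + z ^ 2 • S (T₂ u) = 0 := by
    simpa [← mul_apply_eq_comp S T, hS] using congrArg S h
  refine hasEigenvalue_of_hasEigenvector (x := (u, z • u)) ⟨mem_eigenspace_iff.2 ?_, by simp [hu]⟩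
  refine Prod.ext ?_ (by simp [inv_smul_smul₀ hz])
  simp only [ContinuousLinearMap.coe_coe, quadraticCompanion_apply, neg_apply, mul_apply_eq_comp,
    map_smul, Prod.smul_fst]
  rw [eq_inv_smul_iff₀ hz]
  linear_combination (norm := module) -hSh

theorem finite_setOf_quadratic_pencil {T T₁ T₂ : E →L[𝕜] E} (hT : IsUnit T)
    (hT₁ : IsCompactOperator T₁) (hT₂ : IsCompactOperator T₂) (R : ℝ) :
    {z : 𝕜 | z ≠ 0 ∧ ‖z‖ ≤ R ∧ ∃ u ≠ 0, T u + z • T₁ u + z ^ 2 • T₂ u = 0}.Finite := by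
  rcases le_or_gt R 0 with hR | hR
  · refine Set.finite_empty.subset fun z ⟨hz, hzR, _⟩ => ?_
    exact (norm_pos_iff.2 hz).not_ge (hzR.trans hR)
  set S : E →L[𝕜] E := ↑hT.unit⁻¹
  have hS : S * T = 1 := hT.unit.inv_mul
  have hM := isCompactOperator_quadraticCompanion_mul_self (A := -(S * T₁)) (B := -(S * T₂))
    (hT₁.clm_comp S).neg (hT₂.clm_comp S).neg
  refine ((finite_setOf_hasEigenvalue_of_isCompactOperator_mul_self hM (inv_pos.2 hR)).preimage
    inv_injective.injOn).subset ?_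
  rintro z ⟨hz, hzR, u, hu, h⟩
  exact ⟨hasEigenvalue_quadraticCompanion_inv hS hz hu h,
    norm_inv z ▸ inv_anti₀ (norm_pos_iff.2 hz) hzR⟩

end

theorem Set.Finite.not_accPt {X : Type*} [TopologicalSpace X] [T1Space X] {s : Set X}
    (hs : s.Finite) (x : X) : ¬ AccPt x (Filter.principal s) := by
  rw [accPt_iff_nhds]
  intro h
  obtain ⟨y, ⟨hyU, hys⟩, hyx⟩ :=
    h _ ((hs.sdiff (t := {x})).isClosed.isOpen_compl.mem_nhds fun hx => hx.2 rfl)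
  exact hyU ⟨hys, hyx⟩

theorem OpCoercive.isUnit {H : Type*} [NormedAddCommGroup H] [InnerProductSpace ℂ H]
    [CompleteSpace H] {A : H →L[ℂ] H} (hA : OpCoercive A) : IsUnit A := by
  obtain ⟨c, hc, hA⟩ := hA
  refine ContinuousLinearMap.isUnit_of_forall_le_norm_inner_map A (c := ⟨c, hc.le⟩) hc fun x => ?_
  calc ‖x‖ ^ 2 * c = c * ‖x‖ ^ 2 := mul_comm _ _
    _ ≤ (⟪A x, x⟫_ℂ).re := hA x
    _ ≤ ‖⟪A x, x⟫_ℂ‖ := Complex.re_le_norm _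

theorem finite_Iic_inter_setOf_quadratic_pencil_sq {H : Type*} [NormedAddCommGroup H]
    [NormedSpace ℂ H] {T T₁ T₂ : H →L[ℂ] H} (hT : IsUnit T) (hT₁ : IsCompactOperator T₁)
    (hT₂ : IsCompactOperator T₂) (B : ℝ) :
    (Set.Iic B ∩ {k : ℝ | 0 < k ∧ ∃ u : H, u ≠ 0 ∧
      T u + ((k : ℂ) ^ 2) • T₁ u + ((k : ℂ) ^ 4) • T₂ u = 0}).Finite := by
  refine Set.Finite.of_finite_image (f := fun k : ℝ => (k : ℂ) ^ 2)
    ((finite_setOf_quadratic_pencil hT hT₁ hT₂ (B ^ 2)).subset ?_) ?_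
  · rintro _ ⟨k, ⟨hkB, hk, u, hu, h⟩, rfl⟩
    refine ⟨pow_ne_zero 2 (by exact_mod_cast hk.ne'), ?_, u, hu, by simpa [← pow_mul] using h⟩
    rw [norm_pow, Complex.norm_real, Real.norm_of_nonneg hk.le]
    exact pow_le_pow_left₀ hk.le hkB 2
  · rintro k ⟨-, hk, -⟩ j ⟨-, hj, -⟩ (hkj : (k : ℂ) ^ 2 = (j : ℂ) ^ 2)
    exact (pow_left_inj₀ hk.le hj.le two_ne_zero).1 (by exact_mod_cast hkj)

theorem stmt0_general {H : Type*} [NormedAddCommGroup H] [InnerProductSpace ℂ H] [CompleteSpace H]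
    (T T₁ T₂ : H →L[ℂ] H) (σ : ℝ)
    (hσ : (σ = 1 ∧ OpCoercive T) ∨ (σ = -1 ∧ OpCoercive (-T)))
    (hT₁c : IsCompactOperator T₁)
    (hT₂c : IsCompactOperator T₂) :
    (∀ x : ℝ, ¬ AccPt x (Filter.principal
        {k : ℝ | 0 < k ∧ ∃ u : H, u ≠ 0 ∧
          T u + ((k : ℂ) ^ 2) • T₁ u + ((k : ℂ) ^ 4) • T₂ u = 0})) ∧
    (∀ k : ℝ, (0 < k ∧ ∃ u : H, u ≠ 0 ∧
          T u + ((k : ℂ) ^ 2) • T₁ u + ((k : ℂ) ^ 4) • T₂ u = 0) →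
      FiniteDimensional ℂ
        (LinearMap.ker ((T + ((k : ℂ) ^ 2) • T₁ + ((k : ℂ) ^ 4) • T₂ : H →L[ℂ] H) : H →ₗ[ℂ] H))) := by
  have hT : IsUnit T := by
    rcases hσ with ⟨-, hT⟩ | ⟨-, hT⟩
    · exact hT.isUnit
    · simpa using hT.isUnit.neg
  refine ⟨fun x hx => ?_, fun k _ => ?_⟩
  · exact (finite_Iic_inter_setOf_quadratic_pencil_sq hT hT₁c hT₂c (x + 1)).not_accPt x
      (hx.nhds_inter (Iic_mem_nhds (lt_add_one x)))
  · rw [add_assoc]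
    exact finiteDimensional_ker_add_of_isUnit hT ((hT₁c.smul _).add (hT₂c.smul _))

theorem stmt0 {H : Type*} [NormedAddCommGroup H] [InnerProductSpace ℂ H] [CompleteSpace H]
    (T T₁ T₂ : H →L[ℂ] H) (σ : ℝ)
    (hT : IsSelfAdjoint T)
    (hσ : (σ = 1 ∧ OpCoercive T) ∨ (σ = -1 ∧ OpCoercive (-T)))
    (hT₁c : IsCompactOperator T₁) (hT₁sa : IsSelfAdjoint T₁)
    (hT₂c : IsCompactOperator T₂) (hT₂sa : IsSelfAdjoint T₂)
    (hT₂pos : ∀ u : H, 0 ≤ σ * (inner ℂ (T₂ u) u : ℂ).re) :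
    (∀ x : ℝ, ¬ AccPt x (Filter.principal
        {k : ℝ | 0 < k ∧ ∃ u : H, u ≠ 0 ∧
          T u + ((k : ℂ) ^ 2) • T₁ u + ((k : ℂ) ^ 4) • T₂ u = 0})) ∧
    (∀ k : ℝ, (0 < k ∧ ∃ u : H, u ≠ 0 ∧
          T u + ((k : ℂ) ^ 2) • T₁ u + ((k : ℂ) ^ 4) • T₂ u = 0) →
      FiniteDimensional ℂ
        (LinearMap.ker ((T + ((k : ℂ) ^ 2) • T₁ + ((k : ℂ) ^ 4) • T₂ : H →L[ℂ] H) : H →ₗ[ℂ] H))) :=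
  stmt0_general T T₁ T₂ σ hσ hT₁c hT₂c
end

section
/- Let H be a complex Hilbert space, let T be a bounded self-adjoint operator on H such that either T or -T is coercive (with σ = 1 if T is coercive and σ = -1 if -T is coercive), let T₁ be a compact self-adjoint operator on H, and let T₂ be a compact self-adjoint operator on H with σ·Re⟨T₂u, u⟩ ≥ 0 for all u ∈ H. Then there exists δ > 0 such that every k > 0 for which the equation T u + k² T₁ u + k⁴ T₂ u = 0 admits a nonzero solution u ∈ H satisfies k ≥ δ. In other words, the positive values k at which the quadratic pencil has nontrivial kernel are uniformly bounded away from 0. -/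
open scoped InnerProductSpace

/-!
Pairing the pencil equation `A u + k² B u + k⁴ C u = 0` with `u` and taking real parts gives
`c ‖u‖² ≤ Re⟪A u, u⟫ = -k² Re⟪B u, u⟫ - k⁴ Re⟪C u, u⟫ ≤ k² ‖B‖ ‖u‖²` when `A` is coercive with
constant `c` and `C` is nonnegative, so `k² ‖B‖ ≥ c`. Multiplying the pencil by `σ` reduces the
theorem to this case.
-/

section

variable {𝕜 H : Type*} [RCLike 𝕜] [NormedAddCommGroup H] [InnerProductSpace 𝕜 H]

theorem neg_re_inner_apply_self_le (B : H →L[𝕜] H) (u : H) :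
    -RCLike.re ⟪B u, u⟫_𝕜 ≤ ‖B‖ * ‖u‖ ^ 2 :=
  calc -RCLike.re ⟪B u, u⟫_𝕜 ≤ ‖⟪B u, u⟫_𝕜‖ := (neg_le_abs _).trans (RCLike.abs_re_le_norm _)
    _ ≤ ‖B u‖ * ‖u‖ := norm_inner_le_norm _ _
    _ ≤ ‖B‖ * ‖u‖ * ‖u‖ := by gcongr; exact B.le_opNorm u
    _ = ‖B‖ * ‖u‖ ^ 2 := by ring

theorem le_sq_mul_opNorm_of_pencil_apply_eq_zero (A B C : H →L[𝕜] H) {c k : ℝ} {u : H}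
    (hA : ∀ v, c * ‖v‖ ^ 2 ≤ RCLike.re ⟪A v, v⟫_𝕜) (hC : ∀ v, 0 ≤ RCLike.re ⟪C v, v⟫_𝕜)
    (hu : u ≠ 0) (h : A u + ((k : 𝕜) ^ 2) • B u + ((k : 𝕜) ^ 4) • C u = 0) :
    c ≤ k ^ 2 * ‖B‖ := by
  have hre : RCLike.re ⟪A u, u⟫_𝕜 + k ^ 2 * RCLike.re ⟪B u, u⟫_𝕜
      + k ^ 4 * RCLike.re ⟪C u, u⟫_𝕜 = 0 := by
    have := congrArg (fun v => RCLike.re ⟪v, u⟫_𝕜) h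
    simp only [inner_add_left, inner_smul_left, map_add, inner_zero_left, map_zero, map_pow,
      RCLike.conj_ofReal] at this
    simpa only [← RCLike.ofReal_pow, RCLike.re_ofReal_mul] using this
  have hB := neg_re_inner_apply_self_le B u
  have hk4 : 0 ≤ k ^ 4 * RCLike.re ⟪C u, u⟫_𝕜 := mul_nonneg (by positivity) (hC u)
  have hu2 : 0 < ‖u‖ ^ 2 := by positivity
  have : c * ‖u‖ ^ 2 ≤ k ^ 2 * ‖B‖ * ‖u‖ ^ 2 := by
    nlinarith [hA u, mul_le_mul_of_nonneg_left hB (sq_nonneg k)]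
  exact le_of_mul_le_mul_right this hu2

end

theorem exists_pos_le_of_pencil_apply_eq_zero {H : Type*} [NormedAddCommGroup H]
    [InnerProductSpace ℂ H] (A B C : H →L[ℂ] H) (hA : OpCoercive A)
    (hC : ∀ u, 0 ≤ (⟪C u, u⟫_ℂ).re) :
    ∃ δ : ℝ, 0 < δ ∧ ∀ k : ℝ, 0 < k →
      (∃ u : H, u ≠ 0 ∧ A u + ((k : ℂ) ^ 2) • B u + ((k : ℂ) ^ 4) • C u = 0) → δ ≤ k := by
  obtain ⟨c, hc, hcoer⟩ := hA
  have hden : 0 < ‖B‖ + 1 := by positivity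
  refine ⟨Real.sqrt (c / (‖B‖ + 1)), by positivity, fun k hk ⟨u, hu, h⟩ => ?_⟩
  have hck := le_sq_mul_opNorm_of_pencil_apply_eq_zero A B C hcoer hC hu h
  rw [Real.sqrt_le_left hk.le, div_le_iff₀ hden]
  nlinarith [sq_nonneg k]

theorem opCoercive_smul_of_sign {H : Type*} [NormedAddCommGroup H] [InnerProductSpace ℂ H]
    {T : H →L[ℂ] H} {σ : ℝ} (hσ : (σ = 1 ∧ OpCoercive T) ∨ (σ = -1 ∧ OpCoercive (-T))) :
    OpCoercive ((σ : ℂ) • T) := by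
  rcases hσ with ⟨rfl, hT⟩ | ⟨rfl, hT⟩ <;> simpa using hT

theorem stmt1_general {H : Type*} [NormedAddCommGroup H] [InnerProductSpace ℂ H]
    (T T₁ T₂ : H →L[ℂ] H) (σ : ℝ)
    (hσ : (σ = 1 ∧ OpCoercive T) ∨ (σ = -1 ∧ OpCoercive (-T)))
    (hT₂pos : ∀ u : H, 0 ≤ σ * (inner ℂ (T₂ u) u : ℂ).re) :
    ∃ δ : ℝ, 0 < δ ∧ ∀ k : ℝ, 0 < k →
      (∃ u : H, u ≠ 0 ∧ T u + ((k : ℂ) ^ 2) • T₁ u + ((k : ℂ) ^ 4) • T₂ u = 0) →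
      δ ≤ k := by
  obtain ⟨δ, hδ, hle⟩ := exists_pos_le_of_pencil_apply_eq_zero ((σ : ℂ) • T) ((σ : ℂ) • T₁)
    ((σ : ℂ) • T₂) (opCoercive_smul_of_sign hσ) (fun u => by simpa [inner_smul_left] using hT₂pos u)
  refine ⟨δ, hδ, fun k hk ⟨u, hu, h⟩ => hle k hk ⟨u, hu, ?_⟩⟩
  simp only [_root_.smul_apply, smul_comm _ (σ : ℂ), ← smul_add, h, smul_zero]

theorem stmt1 {H : Type*} [NormedAddCommGroup H] [InnerProductSpace ℂ H] [CompleteSpace H]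
    (T T₁ T₂ : H →L[ℂ] H) (σ : ℝ)
    (hT : IsSelfAdjoint T)
    (hσ : (σ = 1 ∧ OpCoercive T) ∨ (σ = -1 ∧ OpCoercive (-T)))
    (hT₁c : IsCompactOperator T₁) (hT₁sa : IsSelfAdjoint T₁)
    (hT₂c : IsCompactOperator T₂) (hT₂sa : IsSelfAdjoint T₂)
    (hT₂pos : ∀ u : H, 0 ≤ σ * (inner ℂ (T₂ u) u : ℂ).re) :
    ∃ δ : ℝ, 0 < δ ∧ ∀ k : ℝ, 0 < k →
      (∃ u : H, u ≠ 0 ∧ T u + ((k : ℂ) ^ 2) • T₁ u + ((k : ℂ) ^ 4) • T₂ u = 0) →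
      δ ≤ k :=
  stmt1_general T T₁ T₂ σ hσ hT₂pos
end

section
/- Let H be an infinite-dimensional separable complex Hilbert space, let A be a bounded self-adjoint coercive operator on H, and let B be a compact self-adjoint operator on H with Re⟨B u, u⟩ > 0 for all u ≠ 0. For each integer j ≥ 1 let λ_j(A, B) be the j-th generalized min-max value. Then for every j ≥ 1: (a) λ_j(A, B) > 0; (b) λ_j(A, B) ≤ λ_{j+1}(A, B); (c) there exists u ∈ H, u ≠ 0, with A u = λ_j(A, B)·B u; and (d) λ_j(A, B) → ∞ as j → ∞. -/
/-! Minimizing `Re⟪A u, u⟫ / Re⟪B u, u⟫` successively on the `A`-orthogonal complement of the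
minimizers already found produces eigenpairs `(μₙ, uₙ)` of the pencil. A minimizer exists by the
direct method: coercivity of `A` bounds a normalized minimizing sequence, compactness of `B` makes
its image under `B` converge along a subsequence, and the parallelogram law then makes the sequence
itself Cauchy. It is an eigenvector by the Euler–Lagrange equation, because the previous minimizers
are eigenvectors. The `uₙ` are `A`- and `B`-orthogonal, so the quotient is at most `μₙ` on
`span (u₀, …, uₙ)`, while every `(n+1)`-dimensional subspace meets the `A`-orthogonal complement of
`u₀, …, uₙ₋₁`; hence `λₙ₊₁(A, B) = μₙ`. If the `μₙ` were bounded, the `A`-normalized `uₙ` would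
form a bounded `B`-orthogonal sequence with `Re⟪B uₙ, uₙ⟫ = 1 / μₙ` bounded below, which a compact
`B` does not allow. -/

open scoped InnerProductSpace

/-- The `j`-th generalized min-max value `λ_j(A, B)`:
the infimum over all `j`-dimensional subspaces `V` of `H` of the supremum over
nonzero `u ∈ V` of `Re⟪A u, u⟫ / Re⟪B u, u⟫`. -/
noncomputable def minmaxVal {H : Type*} [NormedAddCommGroup H] [InnerProductSpace ℂ H]
    (A B : H →L[ℂ] H) (j : ℕ) : ℝ :=
  ⨅ V : {V : Submodule ℂ H // Module.finrank ℂ V = j},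
    ⨆ u : {u : H // u ∈ (V : Submodule ℂ H) ∧ u ≠ 0},
      (inner ℂ (A u) u : ℂ).re / (inner ℂ (B u) u : ℂ).re

open Filter Topology Set Submodule Module
open ContinuousLinearMap (reApplyInnerSelf_apply reApplyInnerSelf_smul)

section

variable {H : Type*} [NormedAddCommGroup H] [InnerProductSpace ℂ H]

namespace ContinuousLinearMap

variable (T : H →L[ℂ] H)

@[simp]
lemma reApplyInnerSelf_zero : T.reApplyInnerSelf 0 = 0 := by
  simp [reApplyInnerSelf_apply]

lemma reApplyInnerSelf_add_add_reApplyInnerSelf_sub (x y : H) :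
    T.reApplyInnerSelf (x + y) + T.reApplyInnerSelf (x - y) =
      2 * T.reApplyInnerSelf x + 2 * T.reApplyInnerSelf y := by
  simp only [reApplyInnerSelf_apply, map_add, map_sub, inner_add_left, inner_add_right,
    inner_sub_left, inner_sub_right]
  ring

lemma reApplyInnerSelf_le_norm_mul_norm (x : H) : T.reApplyInnerSelf x ≤ ‖T x‖ * ‖x‖ :=
  (RCLike.re_le_norm _).trans (norm_inner_le_norm _ _)

lemma reApplyInnerSelf_sub_smul (S : H →L[ℂ] H) (m : ℝ) (x : H) :
    (T - (m : ℂ) • S).reApplyInnerSelf x = T.reApplyInnerSelf x - m * S.reApplyInnerSelf x := by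
  simp only [reApplyInnerSelf_apply, sub_apply, smul_apply,
    inner_sub_left, inner_smul_left, Complex.conj_ofReal, map_sub, Complex.re_ofReal_mul,
    RCLike.re_to_complex]

lemma reApplyInnerSelf_eq_mul_of_apply_eq_smul {S : H →L[ℂ] H} {m : ℝ} {x : H}
    (h : T x = (m : ℂ) • S x) : T.reApplyInnerSelf x = m * S.reApplyInnerSelf x := by
  simp only [reApplyInnerSelf_apply, h, inner_smul_left, Complex.conj_ofReal,
    Complex.re_ofReal_mul, RCLike.re_to_complex]

lemma exists_smul_reApplyInnerSelf_eq_one {x : H} (hx : 0 < T.reApplyInnerSelf x) :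
    ∃ c : ℂ, c ≠ 0 ∧ T.reApplyInnerSelf (c • x) = 1 := by
  refine ⟨((√(T.reApplyInnerSelf x))⁻¹ : ℝ), by simpa using Real.sqrt_ne_zero'.2 hx, ?_⟩
  rw [reApplyInnerSelf_smul, Complex.norm_real, Real.norm_eq_abs, sq_abs, inv_pow,
    Real.sq_sqrt hx.le, inv_mul_cancel₀ hx.ne']

lemma reApplyInnerSelf_sum_smul {ι : Type*} [Fintype ι] {v : ι → H}
    (hv : Pairwise fun i k => ⟪T (v i), v k⟫_ℂ = 0) (c : ι → ℂ) :
    T.reApplyInnerSelf (∑ i, c i • v i) = ∑ i, ‖c i‖ ^ 2 * T.reApplyInnerSelf (v i) := by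
  simp only [reApplyInnerSelf_apply, map_sum, map_smul, sum_inner, inner_sum, inner_smul_left,
    inner_smul_right]
  refine Finset.sum_congr rfl fun i _ => ?_
  rw [Finset.sum_eq_single i (fun k _ hk => by rw [hv hk, mul_zero]) (by simp),
    ← mul_assoc, Complex.mul_conj', RCLike.re_to_complex, RCLike.re_to_complex,
    ← Complex.ofReal_pow, Complex.re_ofReal_mul]

end ContinuousLinearMap

lemma linearIndependent_of_pairwise_inner_apply_eq_zero {ι : Type*} {T : H →L[ℂ] H} {v : ι → H}
    (hv : Pairwise fun i k => ⟪T (v i), v k⟫_ℂ = 0) (hv0 : ∀ i, ⟪T (v i), v i⟫_ℂ ≠ 0) :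
    LinearIndependent ℂ v :=
  LinearMap.linearIndependent_of_isOrthoᵢ (B := (innerₛₗ ℂ (E := H)).comp (T : H →ₗ[ℂ] H))
    (fun _ _ hik => hv hik) hv0

section SelfAdjoint

variable [CompleteSpace H] {T : H →L[ℂ] H}

lemma IsSelfAdjoint.inner_apply_eq (hT : IsSelfAdjoint T) (x y : H) :
    ⟪T x, y⟫_ℂ = ⟪x, T y⟫_ℂ :=
  hT.isSymmetric x y

lemma IsSelfAdjoint.reApplyInnerSelf_add_smul (hT : IsSelfAdjoint T) (x v : H) (t : ℝ) :
    T.reApplyInnerSelf (x + (t : ℂ) • v) =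
      T.reApplyInnerSelf x + 2 * t * (⟪T x, v⟫_ℂ).re + t ^ 2 * T.reApplyInnerSelf v := by
  have hsymm : (⟪T v, x⟫_ℂ).re = (⟪T x, v⟫_ℂ).re := by
    rw [hT.inner_apply_eq, ← inner_conj_symm, Complex.conj_re]
  simp only [reApplyInnerSelf_apply, map_add, map_smul, inner_add_left, inner_add_right,
    inner_smul_left, inner_smul_right, Complex.add_re, Complex.conj_ofReal,
    Complex.re_ofReal_mul, RCLike.re_to_complex]
  rw [hsymm]
  ring

/-- The quadratic `t ↦ Re⟪T (x + t v), x + t v⟫` is nonnegative and vanishes at `t = 0`, so its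
linear coefficient `2 Re⟪T x, v⟫` vanishes; replacing `v` by `I v` gives the imaginary part. -/
lemma IsSelfAdjoint.inner_apply_eq_zero_of_reApplyInnerSelf_eq_zero (hT : IsSelfAdjoint T)
    {W : Submodule ℂ H} (hnn : ∀ z ∈ W, 0 ≤ T.reApplyInnerSelf z) {x : H} (hxW : x ∈ W)
    (hx : T.reApplyInnerSelf x = 0) {v : H} (hv : v ∈ W) : ⟪T x, v⟫_ℂ = 0 := by
  have hre : ∀ v ∈ W, (⟪T x, v⟫_ℂ).re = 0 := by
    intro v hv
    have hdiscr := discrim_le_zero (a := T.reApplyInnerSelf v) (b := 2 * (⟪T x, v⟫_ℂ).re) (c := 0)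
      fun t => by
        have := hnn _ (W.add_mem hxW (W.smul_mem (t : ℂ) hv))
        rw [hT.reApplyInnerSelf_add_smul, hx] at this
        linarith
    rw [discrim] at hdiscr
    nlinarith [sq_nonneg (⟪T x, v⟫_ℂ).re]
  apply Complex.ext (hre v hv)
  have := hre _ (W.smul_mem Complex.I hv)
  simpa [inner_smul_right] using this

end SelfAdjoint

section RayleighQuotient

noncomputable def pencilRayleigh (A B : H →L[ℂ] H) (x : H) : ℝ :=
  A.reApplyInnerSelf x / B.reApplyInnerSelf x

variable {A B : H →L[ℂ] H}

lemma OpCoercive.reApplyInnerSelf_pos (hA : OpCoercive A) {x : H} (hx : x ≠ 0) :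
    0 < A.reApplyInnerSelf x := by
  obtain ⟨c, hc, hcoer⟩ := hA
  exact (mul_pos hc (pow_pos (norm_pos_iff.2 hx) 2)).trans_le (hcoer x)

lemma OpCoercive.exists_norm_le (hA : OpCoercive A) (M : ℝ) :
    ∃ R, ∀ x, A.reApplyInnerSelf x ≤ M → ‖x‖ ≤ R := by
  obtain ⟨c, hc, hcoer⟩ := hA
  refine ⟨√(M / c), fun x hx => ?_⟩
  rw [← abs_norm]
  exact Real.abs_le_sqrt ((le_div_iff₀' hc).2 ((hcoer x).trans hx))

lemma pencilRayleigh_nonneg (hA : OpCoercive A) (hB : ∀ x, x ≠ 0 → 0 < B.reApplyInnerSelf x)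
    (x : H) : 0 ≤ pencilRayleigh A B x := by
  rcases eq_or_ne x 0 with rfl | hx
  · simp [pencilRayleigh]
  · exact div_nonneg (hA.reApplyInnerSelf_pos hx).le (hB x hx).le

lemma pencilRayleigh_pos (hA : OpCoercive A) (hB : ∀ x, x ≠ 0 → 0 < B.reApplyInnerSelf x)
    {x : H} (hx : x ≠ 0) : 0 < pencilRayleigh A B x :=
  div_pos (hA.reApplyInnerSelf_pos hx) (hB x hx)

lemma pencilRayleigh_smul (A B : H →L[ℂ] H) {c : ℂ} (hc : c ≠ 0) (x : H) :
    pencilRayleigh A B (c • x) = pencilRayleigh A B x := by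
  rw [pencilRayleigh, pencilRayleigh, reApplyInnerSelf_smul, reApplyInnerSelf_smul,
    mul_div_mul_left _ _ (by positivity)]

lemma le_reApplyInnerSelf_of_forall_le_pencilRayleigh
    (hB : ∀ x, x ≠ 0 → 0 < B.reApplyInnerSelf x) {W : Submodule ℂ H} {m : ℝ}
    (h : ∀ z ∈ W, z ≠ 0 → m ≤ pencilRayleigh A B z) {z : H} (hz : z ∈ W) :
    m * B.reApplyInnerSelf z ≤ A.reApplyInnerSelf z := by
  rcases eq_or_ne z 0 with rfl | hz0
  · simp
  · exact (le_div_iff₀ (hB z hz0)).1 (h z hz hz0)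

end RayleighQuotient

section Compactness

lemma IsCompactOperator.exists_strictMono_cauchySeq {𝕜 E F : Type*} [NontriviallyNormedField 𝕜]
    [NormedAddCommGroup E] [NormedSpace 𝕜 E] [NormedAddCommGroup F] [NormedSpace 𝕜 F]
    {T : E →L[𝕜] F} (hT : IsCompactOperator T) {u : ℕ → E} {R : ℝ} (hu : ∀ n, ‖u n‖ ≤ R) :
    ∃ φ : ℕ → ℕ, StrictMono φ ∧ CauchySeq fun n => T (u (φ n)) := by
  have hK := hT.isCompact_closure_image_closedBall (f := (T : E →ₗ[𝕜] F)) R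
  obtain ⟨_, _, φ, hφ, hlim⟩ := hK.tendsto_subseq fun n =>
    subset_closure ⟨u n, mem_closedBall_zero_iff.2 (hu n), rfl⟩
  exact ⟨φ, hφ, hlim.cauchySeq⟩

/-- Along a subsequence `B fₙ` is Cauchy, and `Re⟪B fₙ, fₙ⟫ = Re⟪B fₙ - B fₘ, fₙ⟫` for `m ≠ n`. -/
lemma IsCompactOperator.exists_reApplyInnerSelf_lt {B : H →L[ℂ] H} (hB : IsCompactOperator B)
    {f : ℕ → H} {R : ℝ} (hf : ∀ n, ‖f n‖ ≤ R)
    (horth : Pairwise fun m n => ⟪B (f m), f n⟫_ℂ = 0) {ε : ℝ} (hε : 0 < ε) :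
    ∃ n, B.reApplyInnerSelf (f n) < ε := by
  have hR : 0 ≤ R := (norm_nonneg _).trans (hf 0)
  obtain ⟨φ, hφ, hcauchy⟩ := hB.exists_strictMono_cauchySeq hf
  obtain ⟨N, hN⟩ := Metric.cauchySeq_iff'.1 hcauchy (ε / (R + 1)) (by positivity)
  refine ⟨φ N, ?_⟩
  have hdiff : B.reApplyInnerSelf (f (φ N)) =
      (⟪B (f (φ N)) - B (f (φ (N + 1))), f (φ N)⟫_ℂ).re := by
    rw [inner_sub_left, horth (hφ.injective.ne (show N + 1 ≠ N by omega)), sub_zero,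
      reApplyInnerSelf_apply, RCLike.re_to_complex]
  have hclose : ‖B (f (φ N)) - B (f (φ (N + 1)))‖ < ε / (R + 1) := by
    rw [← dist_eq_norm, dist_comm]
    exact hN (N + 1) (by omega)
  calc B.reApplyInnerSelf (f (φ N))
      ≤ ‖B (f (φ N)) - B (f (φ (N + 1)))‖ * ‖f (φ N)‖ := by
        rw [hdiff]
        exact (Complex.re_le_norm _).trans (norm_inner_le_norm _ _)
    _ ≤ ε / (R + 1) * R := by gcongr; exact hf _
    _ < ε := by rw [div_mul_eq_mul_div, div_lt_iff₀ (by positivity)]; nlinarith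

end Compactness

section DirectMethod

variable {A B : H →L[ℂ] H}

/-- By the parallelogram law for `A` and `B`, `c ‖uₚ - u_q‖²` is at most
`2 (Re⟪A uₚ, uₚ⟫ - m) + 2 (Re⟪A u_q, u_q⟫ - m) + 2 m R ‖B uₚ - B u_q‖`. -/
lemma cauchySeq_of_tendsto_reApplyInnerSelf (hA : OpCoercive A) {W : Submodule ℂ H} {m : ℝ}
    (hm : 0 ≤ m) (hlow : ∀ z ∈ W, m * B.reApplyInnerSelf z ≤ A.reApplyInnerSelf z)
    {u : ℕ → H} (huW : ∀ n, u n ∈ W) (huB : ∀ n, B.reApplyInnerSelf (u n) = 1)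
    (huA : Tendsto (fun n => A.reApplyInnerSelf (u n)) atTop (𝓝 m)) {R : ℝ}
    (hu : ∀ n, ‖u n‖ ≤ R) (hBu : CauchySeq fun n => B (u n)) : CauchySeq u := by
  obtain ⟨c, hc, hcoer⟩ := hA
  set g : ℕ × ℕ → ℝ := fun pq => (2 * (A.reApplyInnerSelf (u pq.1) - m) +
    2 * (A.reApplyInnerSelf (u pq.2) - m) + m * (2 * R) * ‖B (u pq.1) - B (u pq.2)‖) / c
  have hbound : ∀ p q, ‖u p - u q‖ ^ 2 ≤ g (p, q) := by
    intro p q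
    have hsum := hlow _ (W.add_mem (huW p) (huW q))
    have hApar := A.reApplyInnerSelf_add_add_reApplyInnerSelf_sub (u p) (u q)
    have hBpar := B.reApplyInnerSelf_add_add_reApplyInnerSelf_sub (u p) (u q)
    have hBdiff : B.reApplyInnerSelf (u p - u q) ≤ ‖B (u p) - B (u q)‖ * (2 * R) := by
      rw [← map_sub]
      refine (B.reApplyInnerSelf_le_norm_mul_norm _).trans ?_
      gcongr
      linarith [norm_sub_le (u p) (u q), hu p, hu q]
    have hdiff : c * ‖u p - u q‖ ^ 2 ≤ A.reApplyInnerSelf (u p - u q) := hcoer _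
    rw [huB, huB] at hBpar
    rw [le_div_iff₀' hc]
    nlinarith [mul_le_mul_of_nonneg_left hBdiff hm]
  have hg : Tendsto g atTop (𝓝 0) := by
    rw [← prod_atTop_atTop_eq]
    have hA0 := tendsto_sub_nhds_zero_iff.2 huA
    have hB0 : Tendsto (fun pq : ℕ × ℕ => ‖B (u pq.1) - B (u pq.2)‖) (atTop ×ˢ atTop) (𝓝 0) := by
      simpa [prod_atTop_atTop_eq, dist_eq_norm] using cauchySeq_iff_tendsto_dist_atTop_0.1 hBu
    simpa using ((((hA0.comp tendsto_fst).const_mul 2).add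
      ((hA0.comp tendsto_snd).const_mul 2)).add (hB0.const_mul (m * (2 * R)))).div_const c
  refine cauchySeq_iff_tendsto_dist_atTop_0.2 (squeeze_zero (fun _ => dist_nonneg) (fun pq => ?_)
    (by simpa using hg.sqrt))
  rw [dist_eq_norm, ← abs_norm]
  exact Real.abs_le_sqrt (hbound pq.1 pq.2)

lemma exists_mem_reApplyInnerSelf_eq_of_tendsto [CompleteSpace H] (hA : OpCoercive A)
    (hBc : IsCompactOperator B) {W : Submodule ℂ H} (hWc : IsClosed (W : Set H)) {m : ℝ}
    (hm : 0 ≤ m) (hlow : ∀ z ∈ W, m * B.reApplyInnerSelf z ≤ A.reApplyInnerSelf z)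
    {u : ℕ → H} (huW : ∀ n, u n ∈ W) (huB : ∀ n, B.reApplyInnerSelf (u n) = 1)
    (huA : Tendsto (fun n => A.reApplyInnerSelf (u n)) atTop (𝓝 m)) {M : ℝ}
    (huM : ∀ n, A.reApplyInnerSelf (u n) ≤ M) :
    ∃ x ∈ W, B.reApplyInnerSelf x = 1 ∧ A.reApplyInnerSelf x = m := by
  obtain ⟨R, hR⟩ := hA.exists_norm_le M
  obtain ⟨φ, hφ, hBφ⟩ := hBc.exists_strictMono_cauchySeq fun n => hR _ (huM n)
  have huAφ := huA.comp hφ.tendsto_atTop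
  obtain ⟨x, hx⟩ := cauchySeq_tendsto_of_complete <| cauchySeq_of_tendsto_reApplyInnerSelf hA hm
    hlow (fun n => huW (φ n)) (fun n => huB (φ n)) huAφ (fun n => hR _ (huM (φ n))) hBφ
  refine ⟨x, hWc.mem_of_tendsto hx (Eventually.of_forall fun n => huW (φ n)), ?_, ?_⟩
  · refine tendsto_nhds_unique ((B.reApplyInnerSelf_continuous.tendsto x).comp hx) ?_
    simp [Function.comp_def, huB]
  · exact tendsto_nhds_unique ((A.reApplyInnerSelf_continuous.tendsto x).comp hx) huAφ

theorem exists_forall_pencilRayleigh_le [CompleteSpace H] (hA : OpCoercive A)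
    (hBc : IsCompactOperator B) (hB : ∀ x, x ≠ 0 → 0 < B.reApplyInnerSelf x) {W : Submodule ℂ H}
    (hWc : IsClosed (W : Set H)) (hW : W ≠ ⊥) :
    ∃ x ∈ W, x ≠ 0 ∧ ∀ z ∈ W, z ≠ 0 → pencilRayleigh A B x ≤ pencilRayleigh A B z := by
  set S := pencilRayleigh A B '' {z | z ∈ W ∧ z ≠ 0}
  have hSne : S.Nonempty := Set.Nonempty.image _ (W.ne_bot_iff.1 hW)
  have hSbdd : BddBelow S := ⟨0, forall_mem_image.2 fun z _ => pencilRayleigh_nonneg hA hB z⟩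
  have hle : ∀ z ∈ W, z ≠ 0 → sInf S ≤ pencilRayleigh A B z :=
    fun z hz hz0 => csInf_le hSbdd (mem_image_of_mem _ ⟨hz, hz0⟩)
  obtain ⟨r, hr_anti, hr_lim, hrS⟩ := exists_seq_tendsto_sInf hSne hSbdd
  choose z hz hzr using hrS
  choose c hc0 hcB using fun n => B.exists_smul_reApplyInnerSelf_eq_one (hB _ (hz n).2)
  have huA : ∀ n, A.reApplyInnerSelf (c n • z n) = r n := by
    intro n
    rw [← hzr, ← pencilRayleigh_smul A B (hc0 n), pencilRayleigh, hcB, div_one]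
  obtain ⟨x, hxW, hxB, hxA⟩ := exists_mem_reApplyInnerSelf_eq_of_tendsto hA hBc hWc
    (le_csInf hSne (forall_mem_image.2 fun z _ => pencilRayleigh_nonneg hA hB z))
    (fun _ => le_reApplyInnerSelf_of_forall_le_pencilRayleigh hB hle)
    (fun n => W.smul_mem _ (hz n).1) hcB (by simpa only [huA] using hr_lim)
    (fun n => (huA n).trans_le (hr_anti n.zero_le))
  refine ⟨x, hxW, by rintro rfl; simp at hxB, fun w hw hw0 => ?_⟩
  rw [pencilRayleigh, hxA, hxB, div_one]
  exact hle w hw hw0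

end DirectMethod

section EulerLagrange

lemma Submodule.mem_orthogonal_span_iff {s : Set H} {x : H} :
    x ∈ (span ℂ s)ᗮ ↔ ∀ y ∈ s, ⟪y, x⟫_ℂ = 0 := by
  refine ⟨fun h y hy => inner_right_of_mem_orthogonal (subset_span hy) h, fun h => ?_⟩
  have hle : span ℂ s ≤ (ℂ ∙ x)ᗮ :=
    span_le.2 fun y hy => mem_orthogonal_singleton_iff_inner_left.2 (h y hy)
  exact (mem_orthogonal _ _).2 fun y hy => mem_orthogonal_singleton_iff_inner_left.1 (hle hy)

noncomputable def aOrthogonal (A : H →L[ℂ] H) (s : Set H) : Submodule ℂ H := (span ℂ (A '' s))ᗮ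

variable {A B : H →L[ℂ] H} {s t : Set H}

lemma mem_aOrthogonal {x : H} : x ∈ aOrthogonal A s ↔ ∀ y ∈ s, ⟪A y, x⟫_ℂ = 0 := by
  rw [aOrthogonal, mem_orthogonal_span_iff, forall_mem_image]

lemma aOrthogonal_anti (h : s ⊆ t) : aOrthogonal A t ≤ aOrthogonal A s :=
  orthogonal_le (span_mono (image_mono h))

lemma isClosed_aOrthogonal : IsClosed (aOrthogonal A s : Set H) := isClosed_orthogonal _

lemma aOrthogonal_ne_bot (hH : ¬ FiniteDimensional ℂ H) (hs : s.Finite) :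
    aOrthogonal A s ≠ ⊥ := by
  have := FiniteDimensional.span_of_finite ℂ (hs.image A)
  intro h
  rw [aOrthogonal, orthogonal_eq_bot_iff] at h
  rw [h] at this
  exact hH topEquiv.finiteDimensional

/-- `(aOrthogonal A s)ᗮ = A (span s)`, and `A` is definite on `span s`. -/
lemma eq_zero_of_mem_orthogonal_aOrthogonal (hA : OpCoercive A) (hs : s.Finite) {w : H}
    (hw : w ∈ (aOrthogonal A s)ᗮ) (hws : ∀ y ∈ s, ⟪y, w⟫_ℂ = 0) : w = 0 := by
  have := FiniteDimensional.span_of_finite ℂ (hs.image A)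
  rw [aOrthogonal, orthogonal_orthogonal] at hw
  obtain ⟨y, hy, rfl⟩ : w ∈ (span ℂ s).map (A : H →ₗ[ℂ] H) := by
    rwa [map_span, ContinuousLinearMap.coe_coe]
  simp only [ContinuousLinearMap.coe_coe] at hws ⊢
  have hAy : A.reApplyInnerSelf y = 0 := by
    rw [reApplyInnerSelf_apply, inner_eq_zero_symm.1
      (inner_right_of_mem_orthogonal hy (mem_orthogonal_span_iff.2 hws)), map_zero]
  by_contra hy0
  exact (hA.reApplyInnerSelf_pos fun h => hy0 (by simp [h])).ne' hAy

variable [CompleteSpace H]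

/-- Euler–Lagrange: `A x - μ B x` is orthogonal to `aOrthogonal A s` by minimality, and to `s`
because `s` consists of eigenvectors. -/
theorem apply_eq_pencilRayleigh_smul_of_forall_le (hAsa : IsSelfAdjoint A)
    (hBsa : IsSelfAdjoint B) (hA : OpCoercive A) (hB : ∀ x, x ≠ 0 → 0 < B.reApplyInnerSelf x)
    (hs : s.Finite) (hsB : ∀ y ∈ s, ∃ ν : ℂ, B y = ν • A y) {x : H} (hx : x ∈ aOrthogonal A s)
    (hmin : ∀ z ∈ aOrthogonal A s, z ≠ 0 → pencilRayleigh A B x ≤ pencilRayleigh A B z) :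
    A x = (pencilRayleigh A B x : ℂ) • B x := by
  rcases eq_or_ne x 0 with rfl | hx0
  · simp
  set T := A - (pencilRayleigh A B x : ℂ) • B
  have hTsa : IsSelfAdjoint T := hAsa.sub (IsSelfAdjoint.smul (Complex.conj_ofReal _) hBsa)
  have hTnn : ∀ z ∈ aOrthogonal A s, 0 ≤ T.reApplyInnerSelf z := fun z hz => by
    rw [A.reApplyInnerSelf_sub_smul, sub_nonneg]
    exact le_reApplyInnerSelf_of_forall_le_pencilRayleigh hB hmin hz
  have hTx : T.reApplyInnerSelf x = 0 := by
    rw [A.reApplyInnerSelf_sub_smul, pencilRayleigh, div_mul_cancel₀ _ (hB x hx0).ne', sub_self]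
  have hw : T x ∈ (aOrthogonal A s)ᗮ := (mem_orthogonal' _ _).2 fun v hv =>
    hTsa.inner_apply_eq_zero_of_reApplyInnerSelf_eq_zero hTnn hx hTx hv
  have hws : ∀ y ∈ s, ⟪y, T x⟫_ℂ = 0 := by
    intro y hy
    obtain ⟨ν, hν⟩ := hsB y hy
    have hyx := mem_aOrthogonal.1 hx y hy
    rw [show T x = A x - (pencilRayleigh A B x : ℂ) • B x from rfl, inner_sub_right,
      inner_smul_right, ← hAsa.inner_apply_eq, ← hBsa.inner_apply_eq]
    simp [hν, hyx]
  exact sub_eq_zero.1 (eq_zero_of_mem_orthogonal_aOrthogonal hA hs hw hws)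

end EulerLagrange

section MinMax

lemma Submodule.exists_mem_orthogonal_ne_zero_of_finrank_lt (K V : Submodule ℂ H)
    [FiniteDimensional ℂ K] [FiniteDimensional ℂ V] (h : finrank ℂ K < finrank ℂ V) :
    ∃ y ∈ V, y ∈ Kᗮ ∧ y ≠ 0 := by
  set f : V →ₗ[ℂ] K := (K.orthogonalProjectionOnto : H →ₗ[ℂ] K) ∘ₗ V.subtype
  obtain ⟨y, hy, hy0⟩ := (LinearMap.ker f).ne_bot_iff.1 (LinearMap.ker_ne_bot_of_finrank_lt h)
  refine ⟨y, y.2, ?_, by simpa using hy0⟩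
  rw [← ker_orthogonalProjectionOnto]
  exact hy

variable {A B : H →L[ℂ] H}

lemma bddAbove_pencilRayleigh (V : Submodule ℂ H) [FiniteDimensional ℂ V]
    (hB : ∀ x, x ≠ 0 → 0 < B.reApplyInnerSelf x) :
    BddAbove (range fun u : {u : H // u ∈ V ∧ u ≠ 0} => pencilRayleigh A B u) := by
  have hne : ∀ y ∈ Metric.sphere (0 : V) 1, (y : H) ≠ 0 := fun y hy h => by
    simp [h] at hy
  have hcont : ContinuousOn (fun y : V => pencilRayleigh A B y) (Metric.sphere 0 1) :=
    ((A.reApplyInnerSelf_continuous.comp continuous_subtype_val).continuousOn.div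
      (B.reApplyInnerSelf_continuous.comp continuous_subtype_val).continuousOn)
      fun y hy => (hB _ (hne y hy)).ne'
  obtain ⟨C, hC⟩ := (isCompact_sphere (0 : V) 1).bddAbove_image hcont
  refine ⟨C, forall_mem_range.2 fun ⟨u, hu, hu0⟩ => ?_⟩
  have hnorm : ‖u‖ ≠ 0 := norm_ne_zero_iff.2 hu0
  calc pencilRayleigh A B u = pencilRayleigh A B (((‖u‖⁻¹ : ℝ) : ℂ) • u) :=
        (pencilRayleigh_smul A B (by simpa using hnorm) u).symm
    _ ≤ C := hC ⟨((‖u‖⁻¹ : ℝ) : ℂ) • ⟨u, hu⟩, by simp [norm_smul, hnorm], rfl⟩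

lemma minmaxVal_eq_iInf_iSup_pencilRayleigh (A B : H →L[ℂ] H) (j : ℕ) :
    minmaxVal A B j = ⨅ V : {V : Submodule ℂ H // finrank ℂ V = j},
      ⨆ u : {u : H // u ∈ (V : Submodule ℂ H) ∧ u ≠ 0}, pencilRayleigh A B u :=
  rfl

lemma minmaxVal_le (hnn : ∀ x, 0 ≤ pencilRayleigh A B x) {j : ℕ} {V : Submodule ℂ H}
    (hV : finrank ℂ V = j) {M : ℝ} (hM : 0 ≤ M) (hle : ∀ y ∈ V, y ≠ 0 → pencilRayleigh A B y ≤ M) :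
    minmaxVal A B j ≤ M := by
  rw [minmaxVal_eq_iInf_iSup_pencilRayleigh]
  refine (ciInf_le ?_ ⟨V, hV⟩).trans (Real.iSup_le (fun y => hle y.1 y.2.1 y.2.2) hM)
  exact ⟨0, forall_mem_range.2 fun _ => Real.iSup_nonneg fun x => hnn x⟩

lemma le_minmaxVal (hB : ∀ x, x ≠ 0 → 0 < B.reApplyInnerSelf x) {j : ℕ} (hj : 0 < j)
    (hV : ∃ V : Submodule ℂ H, finrank ℂ V = j) {M : ℝ}
    (hge : ∀ V : Submodule ℂ H, finrank ℂ V = j → ∃ y ∈ V, y ≠ 0 ∧ M ≤ pencilRayleigh A B y) :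
    M ≤ minmaxVal A B j := by
  obtain ⟨V₀, hV₀⟩ := hV
  have : Nonempty {V : Submodule ℂ H // finrank ℂ V = j} := ⟨⟨V₀, hV₀⟩⟩
  rw [minmaxVal_eq_iInf_iSup_pencilRayleigh]
  refine le_ciInf fun ⟨V, hV⟩ => ?_
  obtain ⟨y, hyV, hy0, hMy⟩ := hge V hV
  have : FiniteDimensional ℂ V := .of_finrank_pos (hV ▸ hj)
  exact hMy.trans (le_ciSup (bddAbove_pencilRayleigh V hB) ⟨y, hyV, hy0⟩)

end MinMax

lemma exists_seq_eq_apply_range {α : Type*} (next : Set α → α) :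
    ∃ u : ℕ → α, ∀ n, u n = next (range fun i : Fin n => u i) :=
  ⟨Nat.strongRec fun n u => next (range fun i : Fin n => u i i.2), Nat.strongRec_eq _⟩

section MinmaxSeq

variable {A B : H →L[ℂ] H}

structure IsMinmaxSeq (A B : H →L[ℂ] H) (u : ℕ → H) : Prop where
  ne_zero : ∀ n, u n ≠ 0
  mem : ∀ n, u n ∈ aOrthogonal A (range fun i : Fin n => u i)
  le : ∀ n, ∀ z ∈ aOrthogonal A (range fun i : Fin n => u i), z ≠ 0 →
    pencilRayleigh A B (u n) ≤ pencilRayleigh A B z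
  apply_eq : ∀ n, A (u n) = (pencilRayleigh A B (u n) : ℂ) • B (u n)

theorem exists_isMinmaxSeq [CompleteSpace H] (hH : ¬ FiniteDimensional ℂ H)
    (hAsa : IsSelfAdjoint A) (hA : OpCoercive A) (hBc : IsCompactOperator B)
    (hBsa : IsSelfAdjoint B) (hB : ∀ x, x ≠ 0 → 0 < B.reApplyInnerSelf x) :
    ∃ u, IsMinmaxSeq A B u := by
  choose! next hnext_mem hnext_ne hnext_le using fun (s : Set H) (hs : s.Finite) =>
    exists_forall_pencilRayleigh_le hA hBc hB isClosed_aOrthogonal (aOrthogonal_ne_bot hH hs)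
  obtain ⟨u, hu⟩ := exists_seq_eq_apply_range next
  have hfin (n : ℕ) : (range fun i : Fin n => u i).Finite := finite_range _
  have hmem (n : ℕ) := hu n ▸ hnext_mem _ (hfin n)
  have hle (n : ℕ) := hu n ▸ hnext_le _ (hfin n)
  refine ⟨u, fun n => hu n ▸ hnext_ne _ (hfin n), hmem, hle, fun n => ?_⟩
  induction n using Nat.strong_induction_on with | _ n ih
  refine apply_eq_pencilRayleigh_smul_of_forall_le hAsa hBsa hA hB (hfin n) ?_ (hmem n) (hle n)
  rintro _ ⟨i, rfl⟩
  have hpos := pencilRayleigh_pos hA hB (hu i ▸ hnext_ne _ (hfin i))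
  refine ⟨(pencilRayleigh A B (u i) : ℂ)⁻¹, ?_⟩
  rw [ih i i.2, smul_smul, inv_mul_cancel₀ (by exact_mod_cast hpos.ne'), one_smul]

namespace IsMinmaxSeq

variable {u : ℕ → H} (hu : IsMinmaxSeq A B u)
include hu

lemma monotone : Monotone fun n => pencilRayleigh A B (u n) := by
  intro m n hmn
  have hsub : (range fun i : Fin m => u i) ⊆ range fun i : Fin n => u i :=
    range_subset_iff.2 fun i => ⟨Fin.castLE hmn i, rfl⟩
  exact hu.le m (u n) (aOrthogonal_anti hsub (hu.mem n)) (hu.ne_zero n)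

variable [CompleteSpace H] (hAsa : IsSelfAdjoint A) (hA : OpCoercive A)
  (hB : ∀ x, x ≠ 0 → 0 < B.reApplyInnerSelf x)
include hAsa

lemma pairwise_aOrthogonal : Pairwise fun m n => ⟪A (u m), u n⟫_ℂ = 0 := by
  intro m n hmn
  rcases hmn.lt_or_gt with h | h
  · exact mem_aOrthogonal.1 (hu.mem n) _ ⟨⟨m, h⟩, rfl⟩
  · rw [hAsa.inner_apply_eq, ← inner_conj_symm, mem_aOrthogonal.1 (hu.mem m) _ ⟨⟨n, h⟩, rfl⟩,
      map_zero]

include hA hB in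
lemma pairwise_bOrthogonal : Pairwise fun m n => ⟪B (u m), u n⟫_ℂ = 0 := by
  intro m n hmn
  have h : ⟪A (u m), u n⟫_ℂ = 0 := hu.pairwise_aOrthogonal hAsa hmn
  rw [hu.apply_eq m, inner_smul_left, Complex.conj_ofReal] at h
  exact (mul_eq_zero.1 h).resolve_left
    (by exact_mod_cast (pencilRayleigh_pos hA hB (hu.ne_zero m)).ne')

include hA in
lemma finrank_span (n : ℕ) : finrank ℂ (span ℂ (range fun i : Fin n => u i)) = n := by
  have hli := linearIndependent_of_pairwise_inner_apply_eq_zero (v := fun i : Fin n => u i)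
    ((hu.pairwise_aOrthogonal hAsa).comp_of_injective Fin.val_injective) fun i h =>
      (hA.reApplyInnerSelf_pos (hu.ne_zero i)).ne' (by rw [reApplyInnerSelf_apply, h, map_zero])
  rw [finrank_span_eq_card hli, Fintype.card_fin]

include hA hB in
lemma reApplyInnerSelf_le_of_mem_span {n : ℕ} {y : H}
    (hy : y ∈ span ℂ (range fun i : Fin (n + 1) => u i)) :
    A.reApplyInnerSelf y ≤ pencilRayleigh A B (u n) * B.reApplyInnerSelf y := by
  obtain ⟨c, rfl⟩ := (mem_span_range_iff_exists_fun ℂ).1 hy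
  rw [A.reApplyInnerSelf_sum_smul
      ((hu.pairwise_aOrthogonal hAsa).comp_of_injective Fin.val_injective),
    B.reApplyInnerSelf_sum_smul
      ((hu.pairwise_bOrthogonal hAsa hA hB).comp_of_injective Fin.val_injective), Finset.mul_sum]
  refine Finset.sum_le_sum fun i _ => ?_
  rw [A.reApplyInnerSelf_eq_mul_of_apply_eq_smul (hu.apply_eq i), mul_left_comm]
  exact mul_le_mul_of_nonneg_right (hu.monotone (Nat.lt_succ_iff.1 i.2))
    (mul_nonneg (sq_nonneg _) (hB _ (hu.ne_zero i)).le)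

include hA hB in
theorem minmaxVal_succ (n : ℕ) : minmaxVal A B (n + 1) = pencilRayleigh A B (u n) := by
  have hV₀ := hu.finrank_span hAsa hA (n + 1)
  refine le_antisymm (minmaxVal_le (pencilRayleigh_nonneg hA hB) hV₀
    (pencilRayleigh_nonneg hA hB _) fun y hy hy0 =>
      (div_le_iff₀ (hB y hy0)).2 (hu.reApplyInnerSelf_le_of_mem_span hAsa hA hB hy))
    (le_minmaxVal hB n.succ_pos ⟨_, hV₀⟩ fun V hV => ?_)
  have : FiniteDimensional ℂ V := .of_finrank_pos (hV ▸ n.succ_pos)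
  have := FiniteDimensional.span_of_finite ℂ ((finite_range fun i : Fin n => u i).image A)
  have hK : finrank ℂ (span ℂ (A '' range fun i : Fin n => u i)) < finrank ℂ V := by
    rw [hV, ← range_comp]
    exact (finrank_range_le_card _).trans_lt (by simp)
  obtain ⟨y, hyV, hyK, hy0⟩ := exists_mem_orthogonal_ne_zero_of_finrank_lt _ V hK
  exact ⟨y, hyV, hy0, hu.le n y hyK hy0⟩

include hA hB in
theorem tendsto_atTop (hBc : IsCompactOperator B) :
    Tendsto (fun n => pencilRayleigh A B (u n)) atTop atTop := by
  refine tendsto_atTop_atTop_of_monotone hu.monotone fun b => ?_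
  choose c hc0 hcA using fun n =>
    A.exists_smul_reApplyInnerSelf_eq_one (hA.reApplyInnerSelf_pos (hu.ne_zero n))
  obtain ⟨R, hR⟩ := hA.exists_norm_le 1
  have horth : Pairwise fun m n => ⟪B (c m • u m), c n • u n⟫_ℂ = 0 := fun m n hmn => by
    simp [hu.pairwise_bOrthogonal hAsa hA hB hmn]
  have hb : 0 < max b 1 := lt_max_of_lt_right one_pos
  obtain ⟨n, hn⟩ := hBc.exists_reApplyInnerSelf_lt (fun n => hR _ (hcA n).le) horth (inv_pos.2 hb)
  have hAB : A.reApplyInnerSelf (c n • u n) =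
      pencilRayleigh A B (u n) * B.reApplyInnerSelf (c n • u n) :=
    A.reApplyInnerSelf_eq_mul_of_apply_eq_smul
      (by rw [map_smul, map_smul, hu.apply_eq n, smul_comm])
  rw [hcA] at hAB
  have hBpos := hB _ (smul_ne_zero (hc0 n) (hu.ne_zero n))
  refine ⟨n, (le_max_left b 1).trans ((lt_inv_comm₀ hBpos hb).1 hn).le |>.trans ?_⟩
  rw [eq_inv_of_mul_eq_one_left hAB.symm]

end IsMinmaxSeq

end MinmaxSeq

end

theorem stmt4_general {H : Type*} [NormedAddCommGroup H] [InnerProductSpace ℂ H] [CompleteSpace H]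
    (hH : ¬ FiniteDimensional ℂ H)
    (A : H →L[ℂ] H) (hAsa : IsSelfAdjoint A) (hAcoer : OpCoercive A)
    (B : H →L[ℂ] H) (hBc : IsCompactOperator B) (hBsa : IsSelfAdjoint B)
    (hBpos : ∀ u : H, u ≠ 0 → 0 < (inner ℂ (B u) u : ℂ).re) :
    (∀ j : ℕ, 1 ≤ j → 0 < minmaxVal A B j) ∧
    (∀ j : ℕ, 1 ≤ j → minmaxVal A B j ≤ minmaxVal A B (j + 1)) ∧
    (∀ j : ℕ, 1 ≤ j → ∃ u : H, u ≠ 0 ∧ A u = ((minmaxVal A B j : ℝ) : ℂ) • B u) ∧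
    Filter.Tendsto (fun j : ℕ => minmaxVal A B j) Filter.atTop Filter.atTop := by
  obtain ⟨u, hu⟩ := exists_isMinmaxSeq hH hAsa hAcoer hBc hBsa hBpos
  have hval := hu.minmaxVal_succ hAsa hAcoer hBpos
  refine ⟨fun j hj => ?_, fun j hj => ?_, fun j hj => ?_, ?_⟩
  · obtain ⟨n, rfl⟩ := Nat.exists_eq_add_of_le' hj
    rw [hval]
    exact pencilRayleigh_pos hAcoer hBpos (hu.ne_zero n)
  · obtain ⟨n, rfl⟩ := Nat.exists_eq_add_of_le' hj
    rw [hval, hval]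
    exact hu.monotone n.le_succ
  · obtain ⟨n, rfl⟩ := Nat.exists_eq_add_of_le' hj
    exact ⟨u n, hu.ne_zero n, by rw [hval]; exact hu.apply_eq n⟩
  · rw [← tendsto_add_atTop_iff_nat 1]
    simpa only [hval] using hu.tendsto_atTop hAsa hAcoer hBpos hBc

theorem stmt4 {H : Type*} [NormedAddCommGroup H] [InnerProductSpace ℂ H] [CompleteSpace H]
    [TopologicalSpace.SeparableSpace H] (hH : ¬ FiniteDimensional ℂ H)
    (A : H →L[ℂ] H) (hAsa : IsSelfAdjoint A) (hAcoer : OpCoercive A)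
    (B : H →L[ℂ] H) (hBc : IsCompactOperator B) (hBsa : IsSelfAdjoint B)
    (hBpos : ∀ u : H, u ≠ 0 → 0 < (inner ℂ (B u) u : ℂ).re) :
    (∀ j : ℕ, 1 ≤ j → 0 < minmaxVal A B j) ∧
    (∀ j : ℕ, 1 ≤ j → minmaxVal A B j ≤ minmaxVal A B (j + 1)) ∧
    (∀ j : ℕ, 1 ≤ j → ∃ u : H, u ≠ 0 ∧ A u = ((minmaxVal A B j : ℝ) : ℂ) • B u) ∧
    Filter.Tendsto (fun j : ℕ => minmaxVal A B j) Filter.atTop Filter.atTop :=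
  stmt4_general hH A hAsa hAcoer B hBc hBsa hBpos
end
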